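/- Let β be an even positive integer. Define G_{β,N} = g_{β,N} ∏_{j=2}^N [Γ(1 + jβ/2)/Γ(1 + β/2)] with g_{β,N} = (2π)^{N/2} β^{−N(1/2 + β(N−1)/4)}, and 𝒩_β = (π^{β/2}/2^{β−1}) ∏_{j=2}^β [Γ(1 + 2j/β)/Γ(1 + 2/β)]. Then as N → ∞, (1/2) [ G_{β,N−1} / (G_{β,N} 𝒩_β) ] (2N)^{βN/2 + β} = β^{−β/2} 2^{−5/2 + 2β + Nβ} π^{−1 − β/2} N^{−1/2 + β} e^{Nβ/2} Γ(1 + β/2) ∏_{j=2}^β [Γ(1 + 2/β)/Γ(1 + 2j/β)] · (1 + O(N^{−1})); that is, the difference between the left-hand side and the displayed main term is bounded in absolute value by C·N^{−1} times the main term, for some constant C and all sufficiently large N. -/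

import Mathlib

/-!
Telescoping the product in `G_{β,N}` gives
`G_{β,N-1} / G_{β,N} = (2π)^{-1/2} β^{1/2 + β(N-1)/2} Γ(1 + β/2) / Γ(1 + Nβ/2)`, and the
Γ-product in `𝒩_β` is the reciprocal of the one in the main term. What is left is an exact
identity: the prefactor is the main term times `√(2πm) (m/e)^m / Γ(m + 1)` with `m = Nβ/2`.
For even `β`, `m` is an integer and this ratio is `√π / s_m` for Stirling's sequence `s`.
Robbins' bound `log s_k - log s_{k+1} ≤ 1/(12k(k+1))` then gives
`0 ≤ 1 - √π / s_m ≤ 1/(12m) ≤ 1/(12N)`.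
-/

open Filter Finset

noncomputable section

/-- The Gaussian β-ensemble normalisation constant
`G_{β,N} = g_{β,N} ∏_{j=2}^N Γ(1+jβ/2)/Γ(1+β/2)`,
`g_{β,N} = (2π)^{N/2} β^{-N(1/2+β(N-1)/4)}`. -/
def Gconst (β : ℕ) (N : ℕ) : ℝ :=
  (2 * Real.pi) ^ ((N : ℝ) / 2) *
    (β : ℝ) ^ (-(N : ℝ) * (1 / 2 + (β : ℝ) * ((N : ℝ) - 1) / 4)) *
    ∏ j ∈ Finset.Icc 2 N,
      Real.Gamma (1 + (j : ℝ) * (β : ℝ) / 2) / Real.Gamma (1 + (β : ℝ) / 2)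

/-- The Selberg-integral normalisation constant
`𝒩_β = (π^{β/2}/2^{β-1}) ∏_{j=2}^β Γ(1+2j/β)/Γ(1+2/β)`. -/
def Nconst (β : ℕ) : ℝ :=
  Real.pi ^ ((β : ℝ) / 2) / 2 ^ ((β : ℝ) - 1) *
    ∏ j ∈ Finset.Icc 2 β,
      Real.Gamma (1 + 2 * (j : ℝ) / (β : ℝ)) / Real.Gamma (1 + 2 / (β : ℝ))

/-- The main term of the asymptotic expansion. -/
def mainTerm (β : ℕ) (N : ℕ) : ℝ :=
  (β : ℝ) ^ (-(β : ℝ) / 2) * (2 : ℝ) ^ (-(5 : ℝ) / 2 + 2 * (β : ℝ) + (N : ℝ) * (β : ℝ)) *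
    Real.pi ^ (-(1 : ℝ) - (β : ℝ) / 2) * (N : ℝ) ^ (-(1 : ℝ) / 2 + (β : ℝ)) *
    Real.exp ((N : ℝ) * (β : ℝ) / 2) * Real.Gamma (1 + (β : ℝ) / 2) *
    ∏ j ∈ Finset.Icc 2 β,
      Real.Gamma (1 + 2 / (β : ℝ)) / Real.Gamma (1 + 2 * (j : ℝ) / (β : ℝ))

open Real Stirling Topology

/-- Since `1/(12k(k+1)) = 1/(12k) - 1/(12(k+1))`, Robbins' bound makes
`log s_k - 1/(12k)` increase, and its limit is `log √π`. -/
theorem Stirling.log_stirlingSeq_succ_sub_log_sqrt_pi_le (n : ℕ) :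
    log (stirlingSeq (n + 1)) - log √π ≤ 1 / (12 * (n + 1)) := by
  let f (k : ℕ) : ℝ := log (stirlingSeq (k + 1)) - 1 / (12 * (k + 1))
  have hmono : Monotone f := monotone_nat_of_le_succ fun k => by
    have hrobbins := log_stirlingSeq_sdiff_le (k + 1)
    have htel : 1 / (12 * ((k : ℝ) + 1) * ((k : ℝ) + 1 + 1)) =
        1 / (12 * ((k : ℝ) + 1)) - 1 / (12 * ((k : ℝ) + 1 + 1)) := by
      field_simp
      ring
    simp only [f]
    push_cast at hrobbins ⊢
    linarith
  have hlim : Tendsto f atTop (𝓝 (log √π - 0)) := by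
    refine ((continuousAt_log (by positivity)).tendsto.comp
      (tendsto_stirlingSeq_sqrt_pi.comp (tendsto_add_atTop_nat 1))).sub ?_
    exact tendsto_const_nhds.div_atTop <|
      (tendsto_atTop_add_const_right _ 1 tendsto_natCast_atTop_atTop).const_mul_atTop (by norm_num)
  have := hmono.ge_of_tendsto hlim n
  simp only [f, sub_zero] at this
  linarith

theorem Stirling.abs_sqrt_pi_div_stirlingSeq_sub_one_le {n : ℕ} (hn : n ≠ 0) :
    |√π / stirlingSeq n - 1| ≤ 1 / (12 * n) := by
  obtain ⟨n, rfl⟩ := Nat.exists_eq_succ_of_ne_zero hn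
  set r := √π / stirlingSeq (n + 1)
  have hs : 0 < stirlingSeq (n + 1) := stirlingSeq'_pos n
  have hr : 0 < r := by positivity
  have hle : r ≤ 1 := (div_le_one hs).2 (sqrt_pi_le_stirlingSeq hn)
  have hlog : -(1 / (12 * ((n : ℝ) + 1))) ≤ log r := by
    rw [log_div (by positivity) hs.ne']
    linarith [log_stirlingSeq_succ_sub_log_sqrt_pi_le n]
  have hge : 1 - 1 / (12 * ((n : ℝ) + 1)) ≤ r := by
    linarith [add_one_le_exp (log r), exp_log hr]
  rw [abs_sub_comm, abs_of_nonneg (by linarith), Nat.cast_succ]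
  linarith

def gammaStirlingRatio (x : ℝ) : ℝ := √(2 * π * x) * (x / exp 1) ^ x / Gamma (x + 1)

theorem gammaStirlingRatio_natCast (n : ℕ) :
    gammaStirlingRatio n = √π / stirlingSeq n := by
  have hsqrt : √(2 * π * n) = √π * √(2 * n) := by
    rw [← sqrt_mul pi_pos.le]
    ring_nf
  rw [gammaStirlingRatio, Gamma_nat_eq_factorial, rpow_natCast, stirlingSeq, div_div_eq_mul_div,
    hsqrt, mul_assoc]

theorem Gconst_pos (β N : ℕ) (hβ : 0 < β) : 0 < Gconst β N := by
  unfold Gconst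
  positivity

theorem Nconst_pos (β : ℕ) : 0 < Nconst β := by
  unfold Nconst
  positivity

theorem mainTerm_pos (β N : ℕ) (hβ : 0 < β) (hN : 0 < N) : 0 < mainTerm β N := by
  unfold mainTerm
  positivity

theorem Gconst_succ (β N : ℕ) (hβ : 0 < β) :
    Gconst β (N + 1) = Gconst β N *
      ((2 * π) ^ (1 / 2 : ℝ) * (β : ℝ) ^ (-(1 / 2 + (β : ℝ) * N / 2)) *
        (Gamma (1 + ((N + 1 : ℕ) : ℝ) * β / 2) / Gamma (1 + (β : ℝ) / 2))) := by
  have hβ' : (0 : ℝ) < β := by exact_mod_cast hβ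
  have hprod : ∏ j ∈ Icc 2 (N + 1), Gamma (1 + (j : ℝ) * β / 2) / Gamma (1 + (β : ℝ) / 2) =
      (∏ j ∈ Icc 2 N, Gamma (1 + (j : ℝ) * β / 2) / Gamma (1 + (β : ℝ) / 2)) *
        (Gamma (1 + ((N + 1 : ℕ) : ℝ) * β / 2) / Gamma (1 + (β : ℝ) / 2)) := by
    rcases N.eq_zero_or_pos with rfl | hN
    · simp [div_self (Gamma_pos_of_pos (by positivity : (0 : ℝ) < 1 + β / 2)).ne']
    · exact prod_Icc_succ_top (by omega) _
  rw [Gconst, Gconst, hprod, Nat.cast_succ, show ((N : ℝ) + 1) / 2 = N / 2 + 1 / 2 by ring,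
    rpow_add (by positivity),
    show -((N : ℝ) + 1) * (1 / 2 + β * ((N + 1) - 1) / 4) =
      -N * (1 / 2 + β * (N - 1) / 4) + -(1 / 2 + β * N / 2) by ring, rpow_add hβ']
  ring

theorem Nconst_mul_prod (β : ℕ) :
    Nconst β * ∏ j ∈ Icc 2 β, Gamma (1 + 2 / (β : ℝ)) / Gamma (1 + 2 * (j : ℝ) / β) =
      π ^ ((β : ℝ) / 2) / 2 ^ ((β : ℝ) - 1) := by
  rw [Nconst, mul_assoc, ← prod_mul_distrib, prod_eq_one, mul_one]
  intro j _
  have h1 : 0 < Gamma (1 + 2 * (j : ℝ) / β) := by positivity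
  have h2 : 0 < Gamma (1 + 2 / (β : ℝ)) := by positivity
  field_simp

theorem prefactor_eq_mainTerm_mul_gammaStirlingRatio (β N : ℕ) (hβ : 0 < β) (hN : N ≠ 0) :
    1 / 2 * (Gconst β (N - 1) / (Gconst β N * Nconst β)) *
        (2 * (N : ℝ)) ^ ((β : ℝ) * (N : ℝ) / 2 + (β : ℝ)) =
      mainTerm β N * gammaStirlingRatio (N * β / 2) := by
  obtain ⟨M, rfl⟩ := Nat.exists_eq_succ_of_ne_zero hN
  have hβ' : (0 : ℝ) < β := by exact_mod_cast hβ
  have hG := Gconst_pos β M hβ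
  have hNc := Nconst_pos β
  have hprod := eq_div_of_mul_eq hNc.ne' ((mul_comm _ _).trans (Nconst_mul_prod β))
  rw [Nat.succ_sub_one, Gconst_succ β M hβ, mainTerm, hprod, gammaStirlingRatio,
    add_comm _ (1 : ℝ), Nat.cast_succ]
  refine log_injOn_pos (Set.mem_Ioi.2 (by positivity)) (Set.mem_Ioi.2 (by positivity)) ?_
  simp (disch := positivity) only [log_mul, log_div, log_rpow, log_exp, log_sqrt, log_one]
  ring

/-- Asymptotics of the Gaussian β-ensemble normalisation prefactor: as `N → ∞`,
`(1/2) G_{β,N-1} / (G_{β,N} 𝒩_β) (2N)^{βN/2+β}` equals the main term up to a relative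
error `O(N^{-1})`. -/
theorem gaussian_prefactor_asymptotics (β : ℕ) (hβpos : 0 < β) (hβeven : Even β) :
    ∃ C > 0, ∃ N₀ : ℕ, ∀ N : ℕ, N₀ ≤ N →
      |1 / 2 * (Gconst β (N - 1) / (Gconst β N * Nconst β)) *
            (2 * (N : ℝ)) ^ ((β : ℝ) * (N : ℝ) / 2 + (β : ℝ)) -
          mainTerm β N| ≤
        C * (N : ℝ)⁻¹ * mainTerm β N := by
  obtain ⟨b, rfl⟩ := hβeven
  refine ⟨1 / 12, by norm_num, 1, fun N (hN : 0 < N) => ?_⟩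
  have hb : 0 < b := by omega
  have hm : (N : ℝ) * ↑(b + b) / 2 = ↑(N * b) := by push_cast; ring
  have hM := mainTerm_pos (b + b) N hβpos hN
  rw [prefactor_eq_mainTerm_mul_gammaStirlingRatio _ _ hβpos hN.ne', hm,
    gammaStirlingRatio_natCast]
  calc _ = mainTerm (b + b) N * |√π / stirlingSeq (N * b) - 1| := by
        rw [← abs_of_pos hM, ← abs_mul, mul_sub_one, abs_of_pos hM]
    _ ≤ mainTerm (b + b) N * (1 / (12 * ↑(N * b))) := by
        gcongr
        exact abs_sqrt_pi_div_stirlingSeq_sub_one_le (by positivity)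
    _ ≤ mainTerm (b + b) N * (1 / (12 * N)) := by
        gcongr
        exact_mod_cast Nat.le_mul_of_pos_right N hb
    _ = 1 / 12 * (N : ℝ)⁻¹ * mainTerm (b + b) N := by ring
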